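/- arXiv:0707.0070 — 4 statements merged into one kernel-verified Lean document; each statement's English description precedes it below -/
import Mathlib

section
/- Let 𝔤 be a finite-dimensional complex semisimple Lie algebra with Cartan subalgebra 𝔥, root system Φ, and base Π. Let I₊ ⊆ Π and I₋ ⊆ −Π, set Ψ± = {α ∈ Φ : Supp α ⊆ I±}, 𝔩± = ⊕_{α ∈ Ψ±} 𝔤_α, and 𝔩 = 𝔩₊ ⊕ 𝔥 ⊕ 𝔩₋. Then 𝔩 equals its own normalizer in 𝔤, i.e. {x ∈ 𝔤 : [x, 𝔩] ⊆ 𝔩} = 𝔩. -/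
/-!
The sign and support conditions make `Ψ` closed under addition of roots: if `γ = α + β` with
`α, β ∈ Ψ`, the coefficients of the root `γ` have one sign, and every index where `γ` is positive
(negative) is one where `α` or `β` is, hence lies in `I₊` (`I₋`). So `𝔩` is a subalgebra and lies
in its normalizer. Conversely, if `x` normalizes `𝔩` and `α ∉ Ψ`, choose `h ∈ 𝔥` with
`α(h) ≠ 0`: the `𝔤_α`-component of `[h, x] ∈ 𝔩` is `α(h) x_α` and must vanish, so `x_α = 0`.
-/

open DirectSum

section SignSupport

variable {ι : Type*} {Iplus Iminus : Set ι} {a b : ι → ℤ}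

def IsSignSupported (Iplus Iminus : Set ι) (v : ι → ℤ) : Prop :=
  (0 ≤ v ∧ Function.support v ⊆ Iplus) ∨ (v ≤ 0 ∧ Function.support v ⊆ Iminus)

theorem isSignSupported_iff_of_sign {P : Prop} {v : ι → ℤ} (hP : P ↔ 0 ≤ v) (hsign : P ∨ v ≤ 0) :
    (P ∧ Function.support v ⊆ Iplus) ∨ (¬P ∧ Function.support v ⊆ Iminus) ↔
      IsSignSupported Iplus Iminus v := by
  by_cases hp : P
  · have hv : 0 ≤ v := hP.1 hp
    simp only [IsSignSupported, hp, hv, not_true_eq_false, false_and, or_false, true_and]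
    refine ⟨Or.inl, ?_⟩
    rintro (hs | ⟨hv', -⟩)
    · exact hs
    · simp [le_antisymm hv' hv]
  · simp [IsSignSupported, ← hP, hp, hsign.resolve_left hp]

theorem IsSignSupported.mem_left_of_pos (h : IsSignSupported Iplus Iminus a) {i : ι}
    (hi : 0 < a i) : i ∈ Iplus := by
  rcases h with ⟨-, hs⟩ | ⟨hn, -⟩
  · exact hs hi.ne'
  · exact absurd (hn i) hi.not_ge

theorem IsSignSupported.mem_right_of_neg (h : IsSignSupported Iplus Iminus a) {i : ι}
    (hi : a i < 0) : i ∈ Iminus := by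
  rcases h with ⟨hp, -⟩ | ⟨-, hs⟩
  · exact absurd (hp i) hi.not_ge
  · exact hs hi.ne

theorem IsSignSupported.add (ha : IsSignSupported Iplus Iminus a)
    (hb : IsSignSupported Iplus Iminus b) (hsign : 0 ≤ a + b ∨ a + b ≤ 0) :
    IsSignSupported Iplus Iminus (a + b) := by
  rcases hsign with hpos | hneg
  · refine Or.inl ⟨hpos, fun i hi => ?_⟩
    have hab : 0 < a i ∨ 0 < b i := by
      have hi_nonneg := hpos i
      simp only [Function.mem_support, Pi.add_apply, Pi.zero_apply] at hi hi_nonneg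
      omega
    exact hab.elim ha.mem_left_of_pos hb.mem_left_of_pos
  · refine Or.inr ⟨hneg, fun i hi => ?_⟩
    have hab : a i < 0 ∨ b i < 0 := by
      have hi_nonpos := hneg i
      simp only [Function.mem_support, Pi.add_apply, Pi.zero_apply] at hi hi_nonpos
      omega
    exact hab.elim ha.mem_right_of_neg hb.mem_right_of_neg

end SignSupport

section RegularSubspace

variable {K L Φ : Type*} [CommRing K] [LieRing L] [LieAlgebra K L]
  (H : LieSubalgebra K L) (g : Φ → Submodule K L)

def regularSubspace (S : Set Φ) : Submodule K L :=
  (H : Submodule K L) ⊔ ⨆ α ∈ S, g α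

def cartanRootSpaces : Option Φ → Submodule K L :=
  fun o => o.elim (H : Submodule K L) g

variable {H g} {S : Set Φ}

theorem regularSubspace_mono {T : Set Φ} (hST : S ⊆ T) :
    regularSubspace H g S ≤ regularSubspace H g T :=
  sup_le_sup_left (biSup_mono hST) _

theorem cartan_le_regularSubspace : (H : Submodule K L) ≤ regularSubspace H g S :=
  le_sup_left

theorem rootSpace_le_regularSubspace {α : Φ} (hα : α ∈ S) : g α ≤ regularSubspace H g S :=
  (le_biSup g hα).trans le_sup_right

variable {w : Φ → (H : Submodule K L) →ₗ[K] K}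
  (hroot : ∀ α (h : (H : Submodule K L)) (x : L), x ∈ g α → ⁅(h : L), x⁆ = w α h • x)
include hroot

theorem lie_cartan_mem_rootSpace {α : Φ} (h : (H : Submodule K L)) {x : L} (hx : x ∈ g α) :
    ⁅(h : L), x⁆ ∈ g α :=
  hroot α h x hx ▸ (g α).smul_mem _ hx

theorem lie_mem_regularSubspace {ι : Type*} (c : Φ → ι → ℤ)
    (hgg : ∀ α β, ∀ x ∈ g α, ∀ y ∈ g β, ⁅x, y⁆ ∈ regularSubspace H g {γ | c γ = c α + c β})
    (hS : ∀ α ∈ S, ∀ β ∈ S, ∀ γ, c γ = c α + c β → γ ∈ S) {x y : L}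
    (hx : x ∈ regularSubspace H g S) (hy : y ∈ regularSubspace H g S) :
    ⁅x, y⁆ ∈ regularSubspace H g S := by
  let bracket : L →ₗ[K] L →ₗ[K] L := LinearMap.mk₂ K (⁅·, ·⁆) add_lie smul_lie lie_add lie_smul
  suffices Submodule.map₂ bracket (regularSubspace H g S) (regularSubspace H g S) ≤
      regularSubspace H g S from Submodule.map₂_le.1 this x hx y hy
  simp only [regularSubspace, Submodule.map₂_sup_left, Submodule.map₂_sup_right,
    Submodule.map₂_iSup_left, Submodule.map₂_iSup_right, sup_le_iff, iSup_le_iff,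
    Submodule.map₂_le, LinearMap.mk₂_apply, bracket]
  refine ⟨⟨fun h hh h' hh' => ?_, fun α hα x hx h hh => ?_⟩,
    fun β hβ => ⟨fun h hh y hy => ?_, fun α hα x hx y hy => ?_⟩⟩
  · exact cartan_le_regularSubspace (H.lie_mem hh hh')
  · rw [← lie_skew]
    exact neg_mem (rootSpace_le_regularSubspace hα (lie_cartan_mem_rootSpace hroot ⟨h, hh⟩ hx))
  · exact rootSpace_le_regularSubspace hβ (lie_cartan_mem_rootSpace hroot ⟨h, hh⟩ hy)
  · exact regularSubspace_mono (hS α hα β hβ) (hgg α β x hx y hy)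

variable [DecidableEq Φ] [Decomposition (cartanRootSpaces H g)]

theorem decompose_lie_cartan_some (α : Φ) (h : (H : Submodule K L)) (x : L) :
    (decompose (cartanRootSpaces H g) ⁅(h : L), x⁆ (some α) : L) =
      w α h • (decompose (cartanRootSpaces H g) x (some α) : L) := by
  induction x using Decomposition.inductionOn (cartanRootSpaces H g) with
  | zero => simp
  | add x y hx hy =>
    simp only [lie_add, decompose_add, DirectSum.add_apply, Submodule.coe_add, hx, hy, smul_add]
  | @homogeneous o x =>
    obtain ⟨x, hx⟩ := x
    cases o with
    | none =>
      have hhx : ⁅(h : L), x⁆ ∈ cartanRootSpaces H g none := H.lie_mem h.2 hx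
      simp [decompose_of_mem_ne _ hhx (Option.some_ne_none α).symm,
        decompose_of_mem_ne _ hx (Option.some_ne_none α).symm]
    | some β =>
      have hhx : ⁅(h : L), x⁆ ∈ cartanRootSpaces H g (some β) :=
        lie_cartan_mem_rootSpace hroot h hx
      obtain rfl | hβα := eq_or_ne β α
      · rw [decompose_of_mem_same _ hhx, decompose_of_mem_same _ hx, hroot β h x hx]
      · have hne : some β ≠ some α := Option.some_injective _ |>.ne hβα
        simp [decompose_of_mem_ne _ hhx hne, decompose_of_mem_ne _ hx hne]

omit hroot in
theorem decompose_some_eq_zero_of_mem_regularSubspace {α : Φ} (hα : α ∉ S) {y : L}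
    (hy : y ∈ regularSubspace H g S) : decompose (cartanRootSpaces H g) y (some α) = 0 := by
  let π := (component K (Option Φ) (fun o => cartanRootSpaces H g o) (some α)).comp
    (decomposeLinearEquiv (cartanRootSpaces H g)).toLinearMap
  suffices regularSubspace H g S ≤ LinearMap.ker π from this hy
  refine sup_le (fun z hz => ?_) (iSup₂_le fun β hβ z hz => ?_)
  · exact Subtype.ext <| decompose_of_mem_ne _ (i := none) hz (Option.some_ne_none α).symm
  · exact Subtype.ext <| decompose_of_mem_ne _ (i := some β) hz
      (Option.some_injective _ |>.ne (ne_of_mem_of_not_mem hβ hα))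

omit hroot in
theorem mem_regularSubspace_of_decompose_some_eq_zero {x : L}
    (hx : ∀ α ∉ S, decompose (cartanRootSpaces H g) x (some α) = 0) :
    x ∈ regularSubspace H g S := by
  classical
  rw [← sum_support_decompose (cartanRootSpaces H g) x]
  refine Submodule.sum_mem _ fun o _ => ?_
  cases o with
  | none => exact cartan_le_regularSubspace (decompose (cartanRootSpaces H g) x none).2
  | some β =>
    by_cases hβ : β ∈ S
    · exact rootSpace_le_regularSubspace hβ (decompose (cartanRootSpaces H g) x (some β)).2
    · simp [hx β hβ]

theorem decompose_some_eq_zero_of_forall_lie_mem [IsDomain K] [Module.IsTorsionFree K L] {α : Φ}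
    (hw : w α ≠ 0) (hα : α ∉ S) {x : L}
    (hx : ∀ y ∈ regularSubspace H g S, ⁅x, y⁆ ∈ regularSubspace H g S) :
    decompose (cartanRootSpaces H g) x (some α) = 0 := by
  obtain ⟨h, hh⟩ : ∃ h, w α h ≠ 0 := DFunLike.ne_iff.1 hw
  have hhx : ⁅(h : L), x⁆ ∈ regularSubspace H g S := by
    rw [← lie_skew]
    exact neg_mem (hx h (cartan_le_regularSubspace h.2))
  have hcomp := decompose_lie_cartan_some hroot α h x
  rw [decompose_some_eq_zero_of_mem_regularSubspace hα hhx, ZeroMemClass.coe_zero, eq_comm,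
    smul_eq_zero] at hcomp
  exact Subtype.ext (hcomp.resolve_left hh)

end RegularSubspace

theorem normalizer_of_l_eq_l_general
    (L : Type*) [LieRing L] [LieAlgebra ℂ L]
    (H : LieSubalgebra ℂ L)
    (Φ ι : Type*) [DecidableEq Φ]
    (g : Φ → Submodule ℂ L)
    (c : Φ → ι → ℤ)
    (IsPos : Φ → Prop)
    (hpos : ∀ α, IsPos α ↔ ∀ i, 0 ≤ c α i)
    (hposneg : ∀ α, IsPos α ∨ ∀ i, c α i ≤ 0)
    (Supp : Φ → Set ι)
    (hSupp : ∀ α, Supp α = {i | c α i ≠ 0})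
    (w : Φ → ((H : Submodule ℂ L) →ₗ[ℂ] ℂ))
    (hw : ∀ α, w α ≠ 0)
    (hroot : ∀ α (h : (H : Submodule ℂ L)) (x : L), x ∈ g α →
      ⁅(h : L), x⁆ = w α h • x)
    (hgg : ∀ α β, ∀ x ∈ g α, ∀ y ∈ g β,
      ⁅x, y⁆ ∈ (H : Submodule ℂ L) ⊔ ⨆ γ ∈ {γ | c γ = c α + c β}, g γ)
    (hinternal : DirectSum.IsInternal
      (fun o : Option Φ => o.elim (H : Submodule ℂ L) g))
    (Iplus Iminus : Set ι)
    (Ψ : Set Φ)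
    (hΨ : Ψ = {α | (IsPos α ∧ Supp α ⊆ Iplus) ∨ (¬ IsPos α ∧ Supp α ⊆ Iminus)})
    (l : Submodule ℂ L)
    (hl : l = (H : Submodule ℂ L) ⊔ ⨆ α ∈ Ψ, g α) :
    {x : L | ∀ y ∈ l, ⁅x, y⁆ ∈ l} = (l : Set L) := by
  have hsign : ∀ α, 0 ≤ c α ∨ c α ≤ 0 := fun α =>
    (hposneg α).imp (hpos α).1 id
  have hΨ_sign : Ψ = {α | IsSignSupported Iplus Iminus (c α)} := by
    ext α
    have hsupp : Supp α = Function.support (c α) := hSupp α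
    rw [hΨ, Set.mem_ofPred_eq, Set.mem_ofPred_eq, hsupp]
    exact isSignSupported_iff_of_sign ((hpos α).trans Pi.le_def.symm)
      ((hposneg α).imp_right Pi.le_def.2)
  have hΨ_add : ∀ α ∈ Ψ, ∀ β ∈ Ψ, ∀ γ, c γ = c α + c β → γ ∈ Ψ := by
    rw [hΨ_sign]
    intro α hα β hβ γ hγ
    change IsSignSupported Iplus Iminus (c γ)
    have hγ_sign := hsign γ
    rw [hγ] at hγ_sign ⊢
    exact hα.add hβ hγ_sign
  let _ : DirectSum.Decomposition (cartanRootSpaces H g) := hinternal.chooseDecomposition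
  subst hl
  ext x
  refine ⟨fun hx => ?_, fun hx y hy => ?_⟩
  · exact mem_regularSubspace_of_decompose_some_eq_zero fun α hα =>
      decompose_some_eq_zero_of_forall_lie_mem hroot (hw α) hα hx
  · exact lie_mem_regularSubspace hroot c hgg hΨ_add hx hy

/-- Let 𝔤 be a complex semisimple Lie algebra with Cartan subalgebra 𝔥
and root space decomposition 𝔤 = 𝔥 ⊕ ⊕_{α∈Φ} 𝔤_α.  For I₊ ⊆ Π, I₋ ⊆ −Π let
Ψ± = {α ∈ Φ : Supp α ⊆ I±} and 𝔩 = 𝔩₊ ⊕ 𝔥 ⊕ 𝔩₋.  Then 𝔩 equals its own normalizer: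
{x ∈ 𝔤 : [x, 𝔩] ⊆ 𝔩} = 𝔩.  The root data is axiomatized: coordinates `c α : ι → ℤ`
in the base, supports, signs, root functionals `w α` (nonzero, with
[h, x] = w α (h) • x for x ∈ 𝔤_α), the bracket relations among root spaces, and the
internal direct sum decomposition 𝔤 = 𝔥 ⊕ ⊕_α 𝔤_α. -/
theorem normalizer_of_l_eq_l
    (L : Type*) [LieRing L] [LieAlgebra ℂ L] [LieAlgebra.IsSemisimple ℂ L]
    (H : LieSubalgebra ℂ L) [H.IsCartanSubalgebra]
    (Φ ι : Type*) [Fintype Φ] [DecidableEq Φ]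
    (g : Φ → Submodule ℂ L)
    (c : Φ → ι → ℤ)
    (IsPos : Φ → Prop)
    (hpos : ∀ α, IsPos α ↔ ∀ i, 0 ≤ c α i)
    (hposneg : ∀ α, IsPos α ∨ ∀ i, c α i ≤ 0)
    (Supp : Φ → Set ι)
    (hSupp : ∀ α, Supp α = {i | c α i ≠ 0})
    (w : Φ → ((H : Submodule ℂ L) →ₗ[ℂ] ℂ))
    (hw : ∀ α, w α ≠ 0)
    (hroot : ∀ α (h : (H : Submodule ℂ L)) (x : L), x ∈ g α →
      ⁅(h : L), x⁆ = w α h • x)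
    (hHg : ∀ α, ∀ x ∈ (H : Submodule ℂ L), ∀ y ∈ g α, ⁅x, y⁆ ∈ g α)
    (hgg : ∀ α β, ∀ x ∈ g α, ∀ y ∈ g β,
      ⁅x, y⁆ ∈ (H : Submodule ℂ L) ⊔ ⨆ γ ∈ {γ | c γ = c α + c β}, g γ)
    (hinternal : DirectSum.IsInternal
      (fun o : Option Φ => o.elim (H : Submodule ℂ L) g))
    (Iplus Iminus : Set ι)
    (Ψ : Set Φ)
    (hΨ : Ψ = {α | (IsPos α ∧ Supp α ⊆ Iplus) ∨ (¬ IsPos α ∧ Supp α ⊆ Iminus)})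
    (l : Submodule ℂ L)
    (hl : l = (H : Submodule ℂ L) ⊔ ⨆ α ∈ Ψ, g α) :
    {x : L | ∀ y ∈ l, ⁅x, y⁆ ∈ l} = (l : Set L) :=
  normalizer_of_l_eq_l_general L H Φ ι g c IsPos hpos hposneg Supp hSupp w hw hroot hgg hinternal
    Iplus Iminus Ψ hΨ l hl
end

section
/- Let A be a Hopf algebra over a field, B a central Hopf subalgebra of A such that A is (left or right) faithfully flat over B, and let J ⊆ B⁺ = B ∩ ker ε be a Hopf ideal of B. Then the two-sided ideal (J) = AJ generated by J in A is a Hopf ideal of A, and the canonical map B/J → A/AJ is injective. -/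
/-!
Because `i(B)` is central, the left ideal `I = A · i(J)` is two-sided. It is generated by `i(J)`,
where `ε`, `Δ` (modulo `I ⊗ A + A ⊗ I`, i.e. after projecting to `A/I ⊗ A/I`) and `S` behave well
since `i` is a Hopf map and `J` a Hopf ideal; as `ε` and `Δ` are algebra maps and `S` is an
anti-homomorphism, these properties pass from the generators to all of `I`.
For injectivity, regard `A` as a `B`-algebra: `A ⊗_B B/J ≅ A/JA`, and faithful flatness makes
`x ↦ 1 ⊗ x` injective on `B/J`.
-/

open TensorProduct

/-- A (two-sided) Hopf ideal of a Hopf algebra `A`: an ideal `I` with `ε(I) = 0`,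
`Δ(I) ⊆ I ⊗ A + A ⊗ I` and `S(I) ⊆ I`. -/
def IsHopfIdeal (k : Type*) {A : Type*} [CommSemiring k] [Semiring A]
    [HopfAlgebra k A] (I : Submodule k A) : Prop :=
  (∀ a : A, ∀ x ∈ I, a * x ∈ I ∧ x * a ∈ I) ∧
  (∀ x ∈ I, Coalgebra.counit (R := k) x = 0) ∧
  (∀ x ∈ I, Coalgebra.comul (R := k) x ∈
    LinearMap.range (TensorProduct.map I.subtype (LinearMap.id : A →ₗ[k] A)) ⊔
      LinearMap.range (TensorProduct.map (LinearMap.id : A →ₗ[k] A) I.subtype)) ∧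
  (∀ x ∈ I, HopfAlgebra.antipode (R := k) x ∈ I)

namespace Ideal

section Ring

variable {k A B : Type*} [CommRing k] [Ring A] [Algebra k A] [Ring B] [Algebra k B]

theorem mem_range_sup_range_iff_map_mkₐ_eq_zero (I : Ideal A) [I.IsTwoSided] (x : A ⊗[k] A) :
    x ∈ LinearMap.range (TensorProduct.map (I.restrictScalars k).subtype LinearMap.id) ⊔
        LinearMap.range (TensorProduct.map LinearMap.id (I.restrictScalars k).subtype) ↔
      Algebra.TensorProduct.map (Quotient.mkₐ k I) (Quotient.mkₐ k I) x = 0 := by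
  have hexact : Function.Exact (I.restrictScalars k).subtype (Quotient.mkₐ k I).toLinearMap :=
    fun y => by simp [Quotient.eq_zero_iff_mem]
  have hsurj := Quotient.mkₐ_surjective k I
  change _ ↔ TensorProduct.map (Quotient.mkₐ k I).toLinearMap (Quotient.mkₐ k I).toLinearMap x = 0
  rw [← LinearMap.mem_ker, TensorProduct.map_ker hexact hsurj hexact hsurj, sup_comm]
  rfl

theorem map_mkₐ_map_eq_zero_of_le_comap (f : B →ₐ[k] A) {J : Ideal B} [J.IsTwoSided]
    (I : Ideal A) [I.IsTwoSided] (hJI : J ≤ I.comap f) {y : B ⊗[k] B}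
    (hy : Algebra.TensorProduct.map (Quotient.mkₐ k J) (Quotient.mkₐ k J) y = 0) :
    Algebra.TensorProduct.map (Quotient.mkₐ k I) (Quotient.mkₐ k I)
      (TensorProduct.map f.toLinearMap f.toLinearMap y) = 0 := by
  set g := quotientMapₐ I f hJI
  have hfactor : (Algebra.TensorProduct.map (Quotient.mkₐ k I) (Quotient.mkₐ k I)).comp
      (Algebra.TensorProduct.map f f) =
      (Algebra.TensorProduct.map g g).comp
        (Algebra.TensorProduct.map (Quotient.mkₐ k J) (Quotient.mkₐ k J)) := by
    ext <;> simp [g]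
  exact congr($hfactor y).trans (by rw [AlgHom.comp_apply, hy, map_zero])

theorem isTwoSided_map_of_central {F : Type*} [FunLike F B A] [RingHomClass F B A] (f : F)
    (hf : ∀ (b : B) (a : A), f b * a = a * f b) (J : Ideal B) : (J.map f).IsTwoSided := by
  refine ⟨fun a hx => ?_⟩
  induction hx using Submodule.span_induction with
  | mem x hx =>
    obtain ⟨j, hj, rfl⟩ := hx
    rw [hf]
    exact mul_mem_left _ _ (mem_map_of_mem f hj)
  | zero => simp
  | add x y _ _ hx hy => rw [add_mul]; exact add_mem hx hy
  | smul c x _ hx => rw [smul_eq_mul, mul_assoc]; exact mul_mem_left _ _ hx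

theorem restrictScalars_map_eq_span (f : B →ₐ[k] A) (J : Ideal B) :
    (J.map f).restrictScalars k = Submodule.span k {x | ∃ a : A, ∃ j ∈ J, x = a * f j} := by
  refine le_antisymm (fun x hx => ?_) (Submodule.span_le.2 ?_)
  · obtain ⟨c, hc, rfl⟩ := Submodule.mem_span_set.1 hx
    refine Submodule.sum_mem _ fun y hy => Submodule.subset_span ?_
    obtain ⟨j, hj, rfl⟩ := hc hy
    exact ⟨c (f j), j, hj, rfl⟩
  · rintro _ ⟨a, j, hj, rfl⟩
    exact mul_mem_left _ a (mem_map_of_mem f hj)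

end Ring

end Ideal

section HopfAlgebra

variable {k A : Type*} [CommRing k] [Ring A] [HopfAlgebra k A]

open Coalgebra HopfAlgebra

theorem isHopfIdeal_of_span_eq (I : Ideal A) [I.IsTwoSided] {s : Set A} (hs : Ideal.span s = I)
    (hε : ∀ x ∈ s, counit (R := k) x = 0)
    (hΔ : ∀ x ∈ s, Algebra.TensorProduct.map (Ideal.Quotient.mkₐ k I) (Ideal.Quotient.mkₐ k I)
      (comul (R := k) x) = 0)
    (hS : ∀ x ∈ s, antipode k x ∈ I) :
    IsHopfIdeal k (I.restrictScalars k) := by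
  subst hs
  refine ⟨fun a x hx => ⟨Ideal.mul_mem_left _ a hx, Ideal.mul_mem_right a _ hx⟩,
    fun x hx => ?_, fun x hx => ?_, fun x hx => ?_⟩
  · exact (Ideal.span_le (I := RingHom.ker (Bialgebra.counitAlgHom k A))).2 hε hx
  · rw [Ideal.mem_range_sup_range_iff_map_mkₐ_eq_zero]
    exact (Ideal.span_le (I := RingHom.ker ((Algebra.TensorProduct.map
      (Ideal.Quotient.mkₐ k (Ideal.span s)) (Ideal.Quotient.mkₐ k (Ideal.span s))).comp
        (Bialgebra.comulAlgHom k A)))).2 hΔ hx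
  · induction hx using Submodule.span_induction with
    | mem x hx => exact hS x hx
    | zero => simp
    | add x y _ _ hx hy => rw [map_add]; exact add_mem hx hy
    | smul a x _ hx =>
      rw [smul_eq_mul, antipode_mul_antidistrib]
      exact Ideal.mul_mem_right _ _ hx

end HopfAlgebra

/-- Unlike `Ideal.comap_map_eq_self_of_faithfullyFlat`, this allows `A` to be noncommutative. -/
theorem Module.FaithfullyFlat.mem_of_algebraMap_mem_map {R A : Type*} [CommRing R] [Ring A]
    [Algebra R A] [Module.FaithfullyFlat R A] {J : Ideal R} {r : R}
    (hr : algebraMap R A r ∈ J.map (algebraMap R A)) : r ∈ J := by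
  have hmap_le : ∀ x ∈ J.map (algebraMap R A), x ∈ J • (⊤ : Submodule R A) := by
    intro x hx
    induction hx using Submodule.span_induction with
    | mem x hx =>
      obtain ⟨j, hj, rfl⟩ := hx
      rw [Algebra.algebraMap_eq_smul_one]
      exact Submodule.smul_mem_smul hj trivial
    | zero => exact zero_mem _
    | add x y _ _ hx hy => exact add_mem hx hy
    | smul a x _ hx =>
      refine Submodule.smul_induction_on hx (fun j hj m _ => ?_) (fun x y hx hy => ?_)
      · rw [smul_eq_mul, Algebra.mul_smul_comm]
        exact Submodule.smul_mem_smul hj trivial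
      · rw [smul_add]
        exact add_mem hx hy
  rw [← Ideal.Quotient.eq_zero_iff_mem,
    ← Module.FaithfullyFlat.one_tmul_eq_zero_iff (R := R) (A := A) (M := R ⧸ J),
    ← (tensorQuotEquivQuotSMul A J).map_eq_zero_iff, tensorQuotEquivQuotSMul_tmul_mk,
    ← Algebra.algebraMap_eq_smul_one, Submodule.Quotient.mk_eq_zero]
  exact hmap_le _ hr

theorem hopf_ideal_generated_and_injective_general (k : Type*) [Field k]
    (A : Type*) [Ring A] [HopfAlgebra k A]
    (B : Type*) [CommRing B] [HopfAlgebra k B]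
    (i : B →ₐ[k] A)
    -- i is a map of Hopf algebras
    (hicomul : ∀ b : B, Coalgebra.comul (R := k) (i b)
      = (TensorProduct.map i.toLinearMap i.toLinearMap) (Coalgebra.comul (R := k) b))
    (hicounit : ∀ b : B, Coalgebra.counit (R := k) (i b) = Coalgebra.counit (R := k) b)
    (hiantipode : ∀ b : B, HopfAlgebra.antipode (R := k) (i b)
      = i (HopfAlgebra.antipode (R := k) b))
    -- B is central in A
    (hcentral : ∀ (b : B) (x : A), i b * x = x * i b)
    -- A is faithfully flat over B
    (hff : letI : Module B A := Module.compHom A i.toRingHom;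
      Module.FaithfullyFlat B A)
    (J : Ideal B)
    (hJaug : ∀ x ∈ J, Coalgebra.counit (R := k) x = 0)
    (hJHopf : IsHopfIdeal k (J.restrictScalars k))
    (AJ : Submodule k A)
    (hAJ : AJ = Submodule.span k {x | ∃ a : A, ∃ j ∈ J, x = a * i j}) :
    IsHopfIdeal k AJ ∧ ∀ b : B, i b ∈ AJ ↔ b ∈ J := by
  subst hAJ
  have : (J.map i).IsTwoSided := Ideal.isTwoSided_map_of_central i hcentral J
  rw [← Ideal.restrictScalars_map_eq_span]
  refine ⟨isHopfIdeal_of_span_eq _ rfl ?_ ?_ ?_,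
    fun b => ⟨fun hb => ?_, fun hb => Ideal.mem_map_of_mem i hb⟩⟩
  · rintro _ ⟨j, hj, rfl⟩
    rw [hicounit, hJaug j hj]
  · rintro _ ⟨j, hj, rfl⟩
    rw [hicomul]
    exact Ideal.map_mkₐ_map_eq_zero_of_le_comap i _ Ideal.le_comap_map
      ((Ideal.mem_range_sup_range_iff_map_mkₐ_eq_zero J _).1 (hJHopf.2.2.1 j hj))
  · rintro _ ⟨j, hj, rfl⟩
    rw [hiantipode]
    exact Ideal.mem_map_of_mem i (hJHopf.2.2.2 j hj)
  · let _ : Algebra B A := (i : B →+* A).toAlgebra' hcentral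
    have : Module.FaithfullyFlat B A := hff
    exact Module.FaithfullyFlat.mem_of_algebraMap_mem_map hb

/-- Let `A` be a Hopf algebra over a field, `B` a central Hopf
subalgebra (realized by an injective Hopf algebra map `i : B → A` with central image)
over which `A` is faithfully flat, and `J ⊆ B⁺` a Hopf ideal of `B`.  Then `AJ` is a
Hopf ideal of `A` and the canonical map `B/J → A/AJ` is injective, i.e.
`i⁻¹(AJ) = J`. -/
theorem hopf_ideal_generated_and_injective (k : Type*) [Field k]
    (A : Type*) [Ring A] [HopfAlgebra k A]
    (B : Type*) [CommRing B] [HopfAlgebra k B]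
    (i : B →ₐ[k] A) (hinj : Function.Injective i)
    -- i is a map of Hopf algebras
    (hicomul : ∀ b : B, Coalgebra.comul (R := k) (i b)
      = (TensorProduct.map i.toLinearMap i.toLinearMap) (Coalgebra.comul (R := k) b))
    (hicounit : ∀ b : B, Coalgebra.counit (R := k) (i b) = Coalgebra.counit (R := k) b)
    (hiantipode : ∀ b : B, HopfAlgebra.antipode (R := k) (i b)
      = i (HopfAlgebra.antipode (R := k) b))
    -- B is central in A
    (hcentral : ∀ (b : B) (x : A), i b * x = x * i b)
    -- A is faithfully flat over B
    (hff : letI : Module B A := Module.compHom A i.toRingHom;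
      Module.FaithfullyFlat B A)
    (J : Ideal B)
    (hJaug : ∀ x ∈ J, Coalgebra.counit (R := k) x = 0)
    (hJHopf : IsHopfIdeal k (J.restrictScalars k))
    (AJ : Submodule k A)
    (hAJ : AJ = Submodule.span k {x | ∃ a : A, ∃ j ∈ J, x = a * i j}) :
    IsHopfIdeal k AJ ∧ ∀ b : B, i b ∈ AJ ↔ b ∈ J :=
  hopf_ideal_generated_and_injective_general k A B i hicomul hicounit hiantipode hcentral hff J
    hJaug hJHopf AJ hAJ
end

section
/- Let A be a Hopf algebra over a field, B a central Hopf subalgebra with A faithfully flat over B, K a Hopf algebra, and p : B → K a surjective Hopf algebra map with J = ker p. Then the quotient q : A → A/AJ together with the induced inclusion j : K → A/AJ is a pushout in the category of Hopf algebras of the diagram K ← B → A: for any Hopf algebra C with maps φ₁ : K → C and φ₂ : A → C satisfying φ₁ ∘ p = φ₂ ∘ ι, there exists a unique Hopf algebra map φ : A/AJ → C with φ ∘ q = φ₂ and φ ∘ j = φ₁. -/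
open TensorProduct

/-- Let `A` be a Hopf algebra over a field, `B` a central Hopf
subalgebra with `A` faithfully flat over `B`, `K` a Hopf algebra and `p : B → K` a
surjective Hopf algebra map with kernel `J`.  Then the quotient map
`q : A → A/AJ` together with the induced inclusion `j : K → A/AJ` is a pushout of
`K ← B → A` in the category of Hopf algebras.  Here the quotient `A/AJ` is presented
abstractly as a Hopf algebra `Q` with a surjective Hopf map `q` whose kernel is `AJ`. -/
theorem pushout_of_central_quotient (k : Type*) [Field k]
    (A : Type*) [Ring A] [HopfAlgebra k A]
    (B : Type*) [CommRing B] [HopfAlgebra k B]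
    (K : Type*) [Ring K] [HopfAlgebra k K]
    (i : B →ₐc[k] A) (hinj : Function.Injective i)
    (hcentral : ∀ (b : B) (x : A), i b * x = x * i b)
    (hff : letI : Module B A := Module.compHom A (i : B →+* A);
      Module.FaithfullyFlat B A)
    (p : B →ₐc[k] K) (hp : Function.Surjective p)
    (J : Ideal B) (hJ : ∀ b : B, b ∈ J ↔ p b = 0)
    (AJ : Submodule k A)
    (hAJ : AJ = Submodule.span k {x | ∃ a : A, ∃ j ∈ J, x = a * i j})
    -- the quotient Hopf algebra Q = A/AJ with quotient map q and induced map j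
    (Q : Type*) [Ring Q] [HopfAlgebra k Q]
    (q : A →ₐc[k] Q) (hq : Function.Surjective q)
    (hker : ∀ a : A, q a = 0 ↔ a ∈ AJ)
    (j : K →ₐc[k] Q) (hcomm : ∀ b : B, j (p b) = q (i b)) :
    ∀ (C : Type*) [Ring C] [HopfAlgebra k C]
      (φ₁ : K →ₐc[k] C) (φ₂ : A →ₐc[k] C),
      (∀ b : B, φ₁ (p b) = φ₂ (i b)) →
      ∃! φ : Q →ₐc[k] C, (∀ a : A, φ (q a) = φ₂ a) ∧ ∀ x : K, φ (j x) = φ₁ x := by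
  intro C _ _ φ₁ φ₂ hφ
  -- φ₂ vanishes on AJ
  have hvanish : ∀ a ∈ AJ, φ₂ a = 0 := by
    intro a ha
    rw [hAJ] at ha
    induction ha using Submodule.span_induction with
    | mem x hx =>
      obtain ⟨a', j', hj', rfl⟩ := hx
      have hpj : p j' = 0 := (hJ j').mp hj'
      have : φ₂ (i j') = 0 := by rw [← hφ, hpj, map_zero]
      rw [map_mul, this, mul_zero]
    | zero => simp
    | add x y _ _ hx hy => rw [map_add, hx, hy, add_zero]
    | smul c x _ hx => rw [map_smul, hx, smul_zero]
  -- well-definedness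
  have hwd : ∀ a a' : A, q a = q a' → φ₂ a = φ₂ a' := by
    intro a a' h
    have : q (a - a') = 0 := by rw [map_sub, h, sub_self]
    have := hvanish _ ((hker _).mp this)
    rw [map_sub, sub_eq_zero] at this
    exact this
  set s := Function.surjInv hq with hs_def
  have hs : ∀ x : Q, q (s x) = x := Function.surjInv_eq hq
  set f : Q → C := fun x => φ₂ (s x) with hf_def
  have hfq : ∀ a : A, f (q a) = φ₂ a := fun a => hwd _ _ (hs (q a))
  -- linear map
  let fL : Q →ₗ[k] C :=
    { toFun := f
      map_add' := by
        intro x y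
        obtain ⟨a, rfl⟩ := hq x
        obtain ⟨b, rfl⟩ := hq y
        rw [← map_add, hfq, hfq, hfq, map_add]
      map_smul' := by
        intro c x
        obtain ⟨a, rfl⟩ := hq x
        show f (c • q a) = c • f (q a)
        calc f (c • q a) = f (q (c • a)) := by rw [map_smul]
          _ = φ₂ (c • a) := hfq _
          _ = c • φ₂ a := map_smul φ₂ c a
          _ = c • f (q a) := by rw [hfq] }
  have hfLq : fL ∘ₗ (q : A →ₗ[k] Q) = (φ₂ : A →ₗ[k] C) := by
    ext a; exact hfq a
  -- the bialgebra hom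
  let φ : Q →ₐc[k] C :=
    { toLinearMap := fL
      counit_comp := by
        apply LinearMap.ext
        intro x
        obtain ⟨a, rfl⟩ := hq x
        simp only [LinearMap.comp_apply, LinearMap.coe_mk, AddHom.coe_mk]
        show Coalgebra.counit (f (q a)) = Coalgebra.counit (q a)
        rw [hfq, CoalgHomClass.counit_comp_apply, CoalgHomClass.counit_comp_apply]
      map_comp_comul := by
        apply LinearMap.ext
        intro x
        obtain ⟨a, rfl⟩ := hq x
        simp only [LinearMap.comp_apply]
        show TensorProduct.map fL fL (Coalgebra.comul (q a)) = Coalgebra.comul (fL (q a))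
        have h1 : Coalgebra.comul (q a)
            = TensorProduct.map (q : A →ₗ[k] Q) (q : A →ₗ[k] Q) (Coalgebra.comul a) :=
          (CoalgHomClass.map_comp_comul_apply q a).symm
        have h2 : (fL (q a) : C) = φ₂ a := hfq a
        rw [h1, h2, ← LinearMap.comp_apply, ← TensorProduct.map_comp, hfLq]
        exact CoalgHomClass.map_comp_comul_apply φ₂ a
      map_one' := by
        show f 1 = 1
        rw [show (1 : Q) = q 1 from (map_one q).symm, hfq, map_one]
      map_mul' := by
        intro x y
        obtain ⟨a, rfl⟩ := hq x
        obtain ⟨b, rfl⟩ := hq y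
        show f (q a * q b) = f (q a) * f (q b)
        rw [show q a * q b = q (a * b) from (map_mul q a b).symm, hfq, hfq, hfq, map_mul] }
  have hφq : ∀ a : A, φ (q a) = φ₂ a := hfq
  refine ⟨φ, ⟨hφq, ?_⟩, ?_⟩
  · intro x
    obtain ⟨b, rfl⟩ := hp x
    rw [hcomm, hφq, hφ]
  · rintro φ' ⟨h1, h2⟩
    ext x
    obtain ⟨a, rfl⟩ := hq x
    rw [h1, hφq]
end

section
/- Let θ : A → B be a surjective coalgebra map between pointed irreducible coalgebras over a field, both graded with A generated as an algebra in degree 1 (A a Nichols-type graded braided Hopf algebra), and suppose θ maps the coradical filtration of A onto the coradical filtration of B. If the space of primitive elements of A equals its degree-1 component A(1), then the space of primitive elements of B equals B(1); consequently B is generated in degree 1. -/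
open TensorProduct

/-- A submodule `S` of a coalgebra `C` is a subcoalgebra if `Δ(S) ⊆ S ⊗ S`. -/
def IsSubcoalgebra (k : Type*) {C : Type*} [CommRing k] [AddCommGroup C] [Module k C]
    [Coalgebra k C] (S : Submodule k C) : Prop :=
  ∀ x ∈ S, Coalgebra.comul (R := k) x ∈
    LinearMap.range (TensorProduct.map S.subtype S.subtype)

/-- A simple subcoalgebra. -/
def IsSimpleSubcoalgebra (k : Type*) {C : Type*} [CommRing k] [AddCommGroup C]
    [Module k C] [Coalgebra k C] (S : Submodule k C) : Prop :=
  S ≠ ⊥ ∧ IsSubcoalgebra k S ∧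
    ∀ T : Submodule k C, T ≤ S → IsSubcoalgebra k T → T = ⊥ ∨ T = S

/-- The coradical: the sum of all simple subcoalgebras. -/
noncomputable def coradical (k C : Type*) [CommRing k] [AddCommGroup C] [Module k C]
    [Coalgebra k C] : Submodule k C :=
  sSup {S | IsSimpleSubcoalgebra k S}

/-- The coradical filtration: `C₀ = coradical`, `C_{n+1} = Δ⁻¹(C₀ ⊗ C + C ⊗ C_n)`. -/
noncomputable def coradFilt (k C : Type*) [CommRing k] [AddCommGroup C] [Module k C]
    [Coalgebra k C] : ℕ → Submodule k C
  | 0 => coradical k C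
  | n + 1 => Submodule.comap (Coalgebra.comul (R := k))
      (LinearMap.range (TensorProduct.map (coradical k C).subtype (LinearMap.id : C →ₗ[k] C)) ⊔
        LinearMap.range (TensorProduct.map (LinearMap.id : C →ₗ[k] C) (coradFilt k C n).subtype))

/-- The space of primitive elements `{x : Δ x = x ⊗ 1 + 1 ⊗ x}`. -/
noncomputable def primitives (k C : Type*) [CommRing k] [Ring C] [Module k C]
    [Coalgebra k C] : Submodule k C :=
  LinearMap.ker (Coalgebra.comul (R := k)
    - ((TensorProduct.mk k C C).flip 1 + TensorProduct.mk k C C 1))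

/-! A primitive `b` of `B` lies in `B₁ = θ(A₁)`, say `b = θ a`. Since the coradical of `A` is
`k 1`, `Δ a = 1 ⊗ u + v ⊗ 1`, and the counit identities make `a - ε(a) 1` primitive; as
`ε(a) = ε(b) = 0`, `a` itself is primitive, so `b ∈ θ(P(A)) = θ(A(1)) = B(1)`. Conversely `θ`
maps primitives to primitives, and a surjective algebra map carries generators to generators. -/

section Primitives

variable {k : Type*} [CommRing k]

theorem mem_primitives_iff {C : Type*} [Ring C] [Module k C] [Coalgebra k C] {x : C} :
    x ∈ primitives k C ↔ Coalgebra.comul (R := k) x = x ⊗ₜ[k] (1 : C) + (1 : C) ⊗ₜ[k] x := by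
  rw [primitives, LinearMap.mem_ker, LinearMap.sub_apply, LinearMap.add_apply, sub_eq_zero]
  rfl

theorem exists_eq_tmul_of_mem_range_map_span_singleton_left {M N : Type*} [AddCommGroup M]
    [Module k M] [AddCommGroup N] [Module k N] (e : M) {t : M ⊗[k] N}
    (ht : t ∈ LinearMap.range (TensorProduct.map (Submodule.span k {e}).subtype
      (LinearMap.id : N →ₗ[k] N))) :
    ∃ n : N, t = e ⊗ₜ[k] n := by
  obtain ⟨s, rfl⟩ := ht
  induction s with
  | zero => exact ⟨0, by simp⟩
  | tmul m n =>
    obtain ⟨r, hr⟩ := Submodule.mem_span_singleton.mp m.2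
    exact ⟨r • n, by simp [← hr, TensorProduct.smul_tmul]⟩
  | add s s' hs hs' =>
    obtain ⟨n, hn⟩ := hs
    obtain ⟨n', hn'⟩ := hs'
    exact ⟨n + n', by rw [map_add, hn, hn', TensorProduct.tmul_add]⟩

theorem exists_eq_tmul_of_mem_range_map_span_singleton_right {M N : Type*} [AddCommGroup M]
    [Module k M] [AddCommGroup N] [Module k N] (e : N) {t : M ⊗[k] N}
    (ht : t ∈ LinearMap.range (TensorProduct.map (LinearMap.id : M →ₗ[k] M)
      (Submodule.span k {e}).subtype)) :
    ∃ m : M, t = m ⊗ₜ[k] e := by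
  obtain ⟨s, rfl⟩ := ht
  induction s with
  | zero => exact ⟨0, by simp⟩
  | tmul m n =>
    obtain ⟨r, hr⟩ := Submodule.mem_span_singleton.mp n.2
    exact ⟨r • m, by simp [← hr, TensorProduct.smul_tmul]⟩
  | add s s' hs hs' =>
    obtain ⟨m, hm⟩ := hs
    obtain ⟨m', hm'⟩ := hs'
    exact ⟨m + m', by rw [map_add, hm, hm', TensorProduct.add_tmul]⟩

variable {C : Type*} [Ring C] [Bialgebra k C]

theorem counit_eq_zero_of_mem_primitives {x : C} (hx : x ∈ primitives k C) :
    Coalgebra.counit (R := k) x = 0 := by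
  have h := congrArg (TensorProduct.lid k C) (Coalgebra.rTensor_counit_comul (R := k) x)
  rw [mem_primitives_iff.mp hx] at h
  simp only [map_add, LinearMap.rTensor_tmul, TensorProduct.lid_tmul, Bialgebra.counit_one,
    one_smul, add_eq_right] at h
  simpa using congrArg (Coalgebra.counit (R := k)) h

theorem primitives_le_coradFilt_one (h1 : (1 : C) ∈ coradical k C) :
    primitives k C ≤ coradFilt k C 1 := fun x hx => by
  change Coalgebra.comul (R := k) x ∈
    LinearMap.range (TensorProduct.map (coradical k C).subtype LinearMap.id) ⊔
      LinearMap.range (TensorProduct.map LinearMap.id (coradical k C).subtype)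
  rw [mem_primitives_iff.mp hx]
  exact add_mem (Submodule.mem_sup_right ⟨x ⊗ₜ ⟨1, h1⟩, rfl⟩)
    (Submodule.mem_sup_left ⟨⟨1, h1⟩ ⊗ₜ x, rfl⟩)

/-- Both counit identities applied to `Δ a = 1 ⊗ u + v ⊗ 1` give
`a - ε(a) 1 = u - ε(u) 1 = v - ε(v) 1`. -/
theorem sub_counit_smul_one_mem_primitives_of_comul_eq {a u v : C}
    (ha : Coalgebra.comul (R := k) a = (1 : C) ⊗ₜ[k] u + v ⊗ₜ[k] (1 : C)) :
    a - Coalgebra.counit (R := k) a • (1 : C) ∈ primitives k C := by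
  have hu : u + Coalgebra.counit (R := k) v • (1 : C) = a := by
    simpa [ha] using congrArg (TensorProduct.lid k C) (Coalgebra.rTensor_counit_comul (R := k) a)
  have hv : v + Coalgebra.counit (R := k) u • (1 : C) = a := by
    simpa [ha, add_comm] using
      congrArg (TensorProduct.rid k C) (Coalgebra.lTensor_counit_comul (R := k) a)
  have hε : Coalgebra.counit (R := k) a =
      Coalgebra.counit (R := k) u + Coalgebra.counit (R := k) v := by
    simpa using (congrArg (Coalgebra.counit (R := k)) hu).symm
  have hxu : a - Coalgebra.counit (R := k) a • (1 : C) = u - Coalgebra.counit (R := k) u • 1 := by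
    rw [hε, ← hu]
    module
  have hxv : a - Coalgebra.counit (R := k) a • (1 : C) = v - Coalgebra.counit (R := k) v • 1 := by
    rw [hε, ← hv]
    module
  rw [mem_primitives_iff]
  calc Coalgebra.comul (R := k) (a - Coalgebra.counit (R := k) a • (1 : C))
      = (1 : C) ⊗ₜ[k] u + v ⊗ₜ[k] (1 : C) -
          (Coalgebra.counit (R := k) u + Coalgebra.counit (R := k) v) • ((1 : C) ⊗ₜ[k] (1 : C)) := by
        rw [map_sub, map_smul, ha, hε, Bialgebra.comul_one, Algebra.TensorProduct.one_def]
    _ = (v - Coalgebra.counit (R := k) v • 1) ⊗ₜ[k] (1 : C) +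
          (1 : C) ⊗ₜ[k] (u - Coalgebra.counit (R := k) u • 1) := by
        simp only [TensorProduct.tmul_sub, TensorProduct.sub_tmul, TensorProduct.tmul_smul,
          TensorProduct.smul_tmul', add_smul]
        abel
    _ = _ := by rw [← hxu, ← hxv]

theorem sub_counit_smul_one_mem_primitives (hpt : coradical k C = Submodule.span k {1})
    {a : C} (ha : a ∈ coradFilt k C 1) :
    a - Coalgebra.counit (R := k) a • (1 : C) ∈ primitives k C := by
  change Coalgebra.comul (R := k) a ∈
    LinearMap.range (TensorProduct.map (coradical k C).subtype LinearMap.id) ⊔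
      LinearMap.range (TensorProduct.map LinearMap.id (coradical k C).subtype) at ha
  rw [hpt] at ha
  obtain ⟨y, hy, z, hz, hyz⟩ := Submodule.mem_sup.mp ha
  obtain ⟨u, rfl⟩ := exists_eq_tmul_of_mem_range_map_span_singleton_left _ hy
  obtain ⟨v, rfl⟩ := exists_eq_tmul_of_mem_range_map_span_singleton_right _ hz
  exact sub_counit_smul_one_mem_primitives_of_comul_eq hyz.symm

end Primitives

section Quotient

variable {k A B : Type*} [CommRing k] [Ring A] [Bialgebra k A] [Ring B] [Bialgebra k B]
  (θ : A →ₐ[k] B)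

theorem map_primitives_le
    (hθcomul : ∀ a : A, Coalgebra.comul (R := k) (θ a)
      = (TensorProduct.map θ.toLinearMap θ.toLinearMap) (Coalgebra.comul (R := k) a)) :
    Submodule.map θ.toLinearMap (primitives k A) ≤ primitives k B := by
  rintro _ ⟨a, ha, rfl⟩
  rw [SetLike.mem_coe, mem_primitives_iff] at ha
  rw [mem_primitives_iff]
  simp [hθcomul, ha]

theorem primitives_le_map_primitives (hptA : coradical k A = Submodule.span k {1})
    (hθcounit : ∀ a : A, Coalgebra.counit (R := k) (θ a) = Coalgebra.counit (R := k) a)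
    (hθfilt : Submodule.map θ.toLinearMap (coradFilt k A 1) = coradFilt k B 1)
    (h1B : (1 : B) ∈ coradical k B) :
    primitives k B ≤ Submodule.map θ.toLinearMap (primitives k A) := fun b hb => by
  obtain ⟨a, ha, rfl⟩ := hθfilt.ge (primitives_le_coradFilt_one h1B hb)
  have hεa : Coalgebra.counit (R := k) a = 0 := by
    rw [← hθcounit]
    exact counit_eq_zero_of_mem_primitives hb
  have hPa := sub_counit_smul_one_mem_primitives hptA ha
  rw [hεa, zero_smul, sub_zero] at hPa
  exact Submodule.mem_map_of_mem hPa

end Quotient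

theorem Algebra.adjoin_image_eq_top_of_surjective {R A B : Type*} [CommSemiring R] [Semiring A]
    [Algebra R A] [Semiring B] [Algebra R B] {f : A →ₐ[R] B} (hf : Function.Surjective f)
    {s : Set A} (hs : Algebra.adjoin R s = ⊤) : Algebra.adjoin R (f '' s) = ⊤ := by
  rw [Algebra.adjoin_image, hs, Algebra.map_top, AlgHom.range_eq_top]
  exact hf

theorem primitives_of_quotient_nichols_general (k : Type*) [Field k]
    (A : Type*) [Ring A] [Bialgebra k A]
    (B : Type*) [Ring B] [Bialgebra k B]
    -- gradings
    (gA : ℕ → Submodule k A)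
    (gB : ℕ → Submodule k B)
    -- pointed irreducible: the coradical is spanned by 1
    (hptA : coradical k A = Submodule.span k {1})
    (hptB : coradical k B = Submodule.span k {1})
    -- θ : a surjective graded bialgebra map
    (θ : A →ₐ[k] B) (hθsurj : Function.Surjective θ)
    (hθcomul : ∀ a : A, Coalgebra.comul (R := k) (θ a)
      = (TensorProduct.map θ.toLinearMap θ.toLinearMap) (Coalgebra.comul (R := k) a))
    (hθcounit : ∀ a : A, Coalgebra.counit (R := k) (θ a) = Coalgebra.counit (R := k) a)
    (hθgr : ∀ n, Submodule.map θ.toLinearMap (gA n) = gB n)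
    -- θ maps the coradical filtration of A onto that of B
    (hθfilt : ∀ n, Submodule.map θ.toLinearMap (coradFilt k A n) = coradFilt k B n)
    -- A is generated in degree 1 with P(A) = A(1)
    (hPA : primitives k A = gA 1)
    (hAgen : Algebra.adjoin k (gA 1 : Set A) = ⊤) :
    primitives k B = gB 1 ∧ Algebra.adjoin k (gB 1 : Set B) = ⊤ := by
  have h1B : (1 : B) ∈ coradical k B := hptB ▸ Submodule.mem_span_singleton_self 1
  rw [← hθgr 1, ← hPA]
  refine ⟨le_antisymm (primitives_le_map_primitives θ hptA hθcounit (hθfilt 1) h1B)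
    (map_primitives_le θ hθcomul), ?_⟩
  rw [Submodule.map_coe, hPA]
  exact Algebra.adjoin_image_eq_top_of_surjective hθsurj hAgen

/-- Let `θ : A → B` be a surjective (graded) bialgebra map between
pointed irreducible graded bialgebras over a field, with `A` generated in degree 1,
mapping the coradical filtration of `A` onto that of `B`.  If `P(A) = A(1)` then
`P(B) = B(1)`, and `B` is generated in degree 1. -/
theorem primitives_of_quotient_nichols (k : Type*) [Field k]
    (A : Type*) [Ring A] [Bialgebra k A]
    (B : Type*) [Ring B] [Bialgebra k B]
    -- gradings
    (gA : ℕ → Submodule k A) (hgA : DirectSum.IsInternal gA)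
    (gB : ℕ → Submodule k B) (hgB : DirectSum.IsInternal gB)
    -- pointed irreducible: the coradical is spanned by 1
    (hptA : coradical k A = Submodule.span k {1})
    (hptB : coradical k B = Submodule.span k {1})
    -- θ : a surjective graded bialgebra map
    (θ : A →ₐ[k] B) (hθsurj : Function.Surjective θ)
    (hθcomul : ∀ a : A, Coalgebra.comul (R := k) (θ a)
      = (TensorProduct.map θ.toLinearMap θ.toLinearMap) (Coalgebra.comul (R := k) a))
    (hθcounit : ∀ a : A, Coalgebra.counit (R := k) (θ a) = Coalgebra.counit (R := k) a)
    (hθgr : ∀ n, Submodule.map θ.toLinearMap (gA n) = gB n)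
    -- θ maps the coradical filtration of A onto that of B
    (hθfilt : ∀ n, Submodule.map θ.toLinearMap (coradFilt k A n) = coradFilt k B n)
    -- A is generated in degree 1 with P(A) = A(1)
    (hPA : primitives k A = gA 1)
    (hAgen : Algebra.adjoin k (gA 1 : Set A) = ⊤) :
    primitives k B = gB 1 ∧ Algebra.adjoin k (gB 1 : Set B) = ⊤ :=
  primitives_of_quotient_nichols_general k A B gA gB hptA hptB θ hθsurj hθcomul hθcounit hθgr hθfilt
    hPA hAgen
end
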